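/- Let (A, H) be a matched pair of quasigroupoids. Then φ_A(λ_H(φ_H(h,a)), λ_A(φ_A(h,a))) = λ_A(a) and φ_H(λ_H(φ_H(h,a)), λ_A(φ_A(h,a))) = λ_H(h) for all (h,a) with s_H(h) = t_A(a). -/

import Mathlib

/-- A quasigroupoid: objects `O`, arrows `A`, with a partial product `mul`
(meaningful on composable pairs, i.e. when `s a = t b`) and inverse map `inv`.
All axioms involving the product are guarded by composability hypotheses. -/
structure Quasigroupoid (O : Type*) (A : Type*) where
  s : A → O
  t : A → O
  e : O → A
  inv : A → A
  mul : A → A → A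
  s_e : ∀ x, s (e x) = x
  t_e : ∀ x, t (e x) = x
  e_mul : ∀ a, mul (e (t a)) a = a
  mul_e : ∀ a, mul a (e (s a)) = a
  s_mul : ∀ a b, s a = t b → s (mul a b) = s b
  t_mul : ∀ a b, s a = t b → t (mul a b) = t a
  inv_comp_left : ∀ a b, s a = t b → s (inv a) = t (mul a b)
  inv_mul_cancel : ∀ a b, s a = t b → mul (inv a) (mul a b) = b
  comp_inv_right : ∀ a b, s a = t b → s (mul a b) = t (inv b)
  mul_inv_cancel : ∀ a b, s a = t b → mul (mul a b) (inv b) = a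

/-- A matched pair of quasigroupoids with common base `O`:
a left action `φA` of `H` on `A` and a right action `φH` of `A` on `H`
satisfying the module conditions and the matched pair compatibilities. -/
structure IsMatchedPair {O A1 H1 : Type*} (A : Quasigroupoid O A1) (H : Quasigroupoid O H1)
    (φA : H1 → A1 → A1) (φH : H1 → A1 → H1) : Prop where
  t_act : ∀ h a, H.s h = A.t a → A.t (φA h a) = H.t h
  act_mul : ∀ g h a, H.s g = H.t h → H.s h = A.t a → φA (H.mul g h) a = φA g (φA h a)
  act_id : ∀ a, φA (H.e (A.t a)) a = a
  s_act : ∀ h a, H.s h = A.t a → H.s (φH h a) = A.s a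
  actH_mul : ∀ h a b, H.s h = A.t a → A.s a = A.t b → φH h (A.mul a b) = φH (φH h a) b
  actH_id : ∀ h, φH h (A.e (H.s h)) = h
  compat_st : ∀ h a, H.s h = A.t a → A.s (φA h a) = H.t (φH h a)
  compat_mulA : ∀ h a b, H.s h = A.t a → A.s a = A.t b →
    φA h (A.mul a b) = A.mul (φA h a) (φA (φH h a) b)
  compat_mulH : ∀ g h a, H.s g = H.t h → H.s h = A.t a →
    φH (H.mul g h) a = H.mul (φH g (φA h a)) (φH h a)

/-
With `g = φH(h,a)` and `b = φA(h,a)`, applying the compatibility axioms to the composable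
pair `(a, λ_A a)` gives `φA(g, λ_A a) = λ_A b` and `φH(g, λ_A a) = h`. Applying them next
to the pair `(λ_H g, g)` acting on `λ_A a`, and using that `λ_H g ⋆ g` is an identity,
yields both identities; inverses are recognised by their uniqueness.
-/

namespace Quasigroupoid
variable {O A1 : Type*} (Q : Quasigroupoid O A1)

theorem s_inv (a : A1) : Q.s (Q.inv a) = Q.t a := by
  simpa only [Q.mul_e] using Q.inv_comp_left a (Q.e (Q.s a)) (Q.t_e _).symm

theorem t_inv (a : A1) : Q.t (Q.inv a) = Q.s a := by
  simpa only [Q.e_mul] using (Q.comp_inv_right (Q.e (Q.t a)) a (Q.s_e _)).symm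

theorem inv_mul_eq_e (a : A1) : Q.mul (Q.inv a) a = Q.e (Q.s a) := by
  simpa only [Q.mul_e] using Q.inv_mul_cancel a (Q.e (Q.s a)) (Q.t_e _).symm

theorem mul_inv_eq_e (a : A1) : Q.mul a (Q.inv a) = Q.e (Q.t a) := by
  simpa only [Q.e_mul] using Q.mul_inv_cancel (Q.e (Q.t a)) a (Q.s_e _)

theorem e_mul_e (x : O) : Q.mul (Q.e x) (Q.e x) = Q.e x := by
  simpa only [Q.t_e] using Q.e_mul (Q.e x)

theorem eq_e_of_mul_self {u : A1} (hst : Q.s u = Q.t u) (hu : Q.mul u u = u) :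
    u = Q.e (Q.s u) := by
  simpa only [hu, Q.inv_mul_eq_e] using (Q.inv_mul_cancel u u hst).symm

theorem eq_inv_of_mul_eq_e_left {b x : A1} (hbx : Q.s b = Q.t x)
    (h : Q.mul b x = Q.e (Q.t b)) : x = Q.inv b := by
  calc x = Q.mul (Q.inv b) (Q.mul b x) := (Q.inv_mul_cancel b x hbx).symm
    _ = Q.inv b := by rw [h, ← Q.s_inv, Q.mul_e]

theorem eq_inv_of_mul_eq_e_right {x b : A1} (hxb : Q.s x = Q.t b)
    (h : Q.mul x b = Q.e (Q.s b)) : x = Q.inv b := by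
  calc x = Q.mul (Q.mul x b) (Q.inv b) := (Q.mul_inv_cancel x b hxb).symm
    _ = Q.inv b := by rw [h, ← Q.t_inv, Q.e_mul]

end Quasigroupoid

namespace IsMatchedPair
variable {O A1 H1 : Type*} {A : Quasigroupoid O A1} {H : Quasigroupoid O H1}
  {φA : H1 → A1 → A1} {φH : H1 → A1 → H1}

theorem act_e (hmp : IsMatchedPair A H φA φH) (h : H1) :
    φA h (A.e (H.s h)) = A.e (H.t h) := by
  have hc : H.s h = A.t (A.e (H.s h)) := (A.t_e _).symm
  have hs : A.s (φA h (A.e (H.s h))) = H.t h := by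
    simpa only [hmp.actH_id] using hmp.compat_st h _ hc
  have hidem := hmp.compat_mulA h _ _ hc (by rw [A.s_e, A.t_e])
  rw [A.e_mul_e, hmp.actH_id] at hidem
  simpa only [hs] using A.eq_e_of_mul_self (hs.trans (hmp.t_act h _ hc).symm) hidem.symm

theorem actH_e (hmp : IsMatchedPair A H φA φH) (a : A1) :
    φH (H.e (A.t a)) a = H.e (A.s a) := by
  have hc : H.s (H.e (A.t a)) = A.t a := H.s_e _
  have ht : H.t (φH (H.e (A.t a)) a) = A.s a := by
    simpa only [hmp.act_id] using (hmp.compat_st _ a hc).symm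
  have hidem := hmp.compat_mulH _ _ a (by rw [H.s_e, H.t_e]) hc
  rw [H.e_mul_e, hmp.act_id] at hidem
  simpa only [hmp.s_act _ a hc] using
    H.eq_e_of_mul_self ((hmp.s_act _ a hc).trans ht.symm) hidem.symm

theorem act_actH_inv (hmp : IsMatchedPair A H φA φH) {h : H1} {a : A1}
    (hc : H.s h = A.t a) : φA (φH h a) (A.inv a) = A.inv (φA h a) := by
  have hca : A.s a = A.t (A.inv a) := (A.t_inv a).symm
  have hmul := hmp.compat_mulA h a (A.inv a) hc hca
  rw [A.mul_inv_eq_e, ← hc, hmp.act_e, ← hmp.t_act h a hc] at hmul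
  refine A.eq_inv_of_mul_eq_e_left ?_ hmul.symm
  rw [hmp.compat_st h a hc, hmp.t_act _ _ ((hmp.s_act h a hc).trans hca)]

theorem actH_actH_inv (hmp : IsMatchedPair A H φA φH) {h : H1} {a : A1}
    (hc : H.s h = A.t a) : φH (φH h a) (A.inv a) = h := by
  have hmul := hmp.actH_mul h a (A.inv a) hc (A.t_inv a).symm
  rwa [A.mul_inv_eq_e, ← hc, hmp.actH_id, eq_comm] at hmul

end IsMatchedPair

/-- For a matched pair of quasigroupoids:
`φA(λ_H(φH(h,a)), λ_A(φA(h,a))) = λ_A a` and `φH(λ_H(φH(h,a)), λ_A(φA(h,a))) = λ_H h`. -/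
theorem matchedPair_double_inv {O A1 H1 : Type*}
    (A : Quasigroupoid O A1) (H : Quasigroupoid O H1)
    (φA : H1 → A1 → A1) (φH : H1 → A1 → H1)
    (hmp : IsMatchedPair A H φA φH) (h : H1) (a : A1) (hc : H.s h = A.t a) :
    φA (H.inv (φH h a)) (A.inv (φA h a)) = A.inv a ∧
    φH (H.inv (φH h a)) (A.inv (φA h a)) = H.inv h := by
  set g := φH h a
  have hg : H.s (H.inv g) = H.t g := H.s_inv g
  have hga : H.s g = A.t (A.inv a) := (hmp.s_act h a hc).trans (A.t_inv a).symm
  have hφA := hmp.act_mul (H.inv g) g (A.inv a) hg hga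
  have hφH := hmp.compat_mulH (H.inv g) g (A.inv a) hg hga
  rw [H.inv_mul_eq_e, hga, hmp.act_id, hmp.act_actH_inv hc] at hφA
  rw [H.inv_mul_eq_e, hga, hmp.actH_e, hmp.act_actH_inv hc, hmp.actH_actH_inv hc,
    A.s_inv, ← hc] at hφH
  refine ⟨hφA.symm, H.eq_inv_of_mul_eq_e_right ?_ hφH.symm⟩
  rw [hmp.s_act _ _ (by rw [A.t_inv, hmp.compat_st h a hc, hg]), A.s_inv, hmp.t_act h a hc]
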